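/- Let q : ℝⁿ → ℝ ∪ {∞} be proper lsc and continuous relative to its domain, c continuously differentiable. Suppose x⋆ is feasible (x⋆ ∈ dom q, c(x⋆) ≤ 0) and there exist a feasible sequence x^k → x⋆ and y^k ∈ ℝ₊ᵐ with dist(-∇c(x^k)ᵀ y^k, ∂q(x^k)) → 0 and y_i^k c_i(x⋆) = 0 for all i, k (i.e. x⋆ is A-KKT optimal). If (y^k) is bounded, then x⋆ is KKT optimal: there exists y⋆ ∈ ℝ₊ᵐ with -∇c(x⋆)ᵀ y⋆ ∈ ∂q(x⋆) and y⋆_i c_i(x⋆) = 0 for all i. -/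

import Mathlib

open Filter Topology

/-- The regular (Fréchet) subdifferential of `h` at `xb`. -/
noncomputable def FSubdiff {n : ℕ} (h : EuclideanSpace ℝ (Fin n) → EReal)
    (xb : EuclideanSpace ℝ (Fin n)) : Set (EuclideanSpace ℝ (Fin n)) :=
  {v | 0 ≤ Filter.liminf
    (fun x => (h x - h xb - ((inner ℝ v (x - xb) : ℝ) : EReal)) / ((‖x - xb‖ : ℝ) : EReal))
    (𝓝[≠] xb)}

/-- The limiting subdifferential of `h` at `xb`. -/
noncomputable def LimSubdiff {n : ℕ} (h : EuclideanSpace ℝ (Fin n) → EReal)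
    (xb : EuclideanSpace ℝ (Fin n)) : Set (EuclideanSpace ℝ (Fin n)) :=
  {v | h xb ≠ ⊤ ∧ ∃ (x : ℕ → EuclideanSpace ℝ (Fin n)) (w : ℕ → EuclideanSpace ℝ (Fin n)),
    Tendsto x atTop (𝓝 xb) ∧ Tendsto w atTop (𝓝 v) ∧
    Tendsto (fun k => h (x k)) atTop (𝓝 (h xb)) ∧ ∀ k, w k ∈ FSubdiff h (x k)}

/-!
Bolzano–Weierstrass gives a subsequence of the bounded multipliers converging to some `y⋆`;
sign and complementarity pass to the limit, and along this subsequence the A-KKT residuals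
`-∇c(x^k)ᵀ y^k` converge to `-∇c(x⋆)ᵀ y⋆` while staying at vanishing distance from
`∂q(x^k)`. Each limiting subgradient is itself approximated by Fréchet subgradients at points
of `dom q`, so a diagonal sequence of Fréchet subgradients converges to `-∇c(x⋆)ᵀ y⋆` at points
tending to `x⋆`; continuity of `q` on its domain makes this convergence `q`-attentive.
-/

section Subdifferential

variable {n : ℕ} {q : EuclideanSpace ℝ (Fin n) → EReal}

theorem exists_fSubdiff_near_of_mem_limSubdiff {x v : EuclideanSpace ℝ (Fin n)}
    (hv : v ∈ LimSubdiff q x) {ε : ℝ} (hε : 0 < ε) :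
    ∃ X W, dist X x < ε ∧ dist W v < ε ∧ q X ≠ ⊤ ∧ W ∈ FSubdiff q X := by
  obtain ⟨hx, a, b, ha, hb, hqa, hab⟩ := hv
  have hnear : ∀ᶠ j in atTop, dist (a j) x < ε ∧ dist (b j) v < ε ∧ q (a j) ≠ ⊤ :=
    (Metric.tendsto_nhds.1 ha ε hε).and <| (Metric.tendsto_nhds.1 hb ε hε).and <|
      (hqa.eventually (isOpen_Iio.mem_nhds hx.lt_top)).mono fun _ h => h.ne
  obtain ⟨j, hj⟩ := hnear.exists
  exact ⟨a j, b j, hj.1, hj.2.1, hj.2.2, hab j⟩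

theorem mem_limSubdiff_of_forall_exists_fSubdiff_near {xb v : EuclideanSpace ℝ (Fin n)}
    (hq : ∀ x : ℕ → EuclideanSpace ℝ (Fin n), (∀ k, q (x k) ≠ ⊤) → Tendsto x atTop (𝓝 xb) →
      Tendsto (fun k => q (x k)) atTop (𝓝 (q xb)))
    (hxb : q xb ≠ ⊤)
    (hnear : ∀ ε > 0, ∃ X W, dist X xb < ε ∧ dist W v < ε ∧ q X ≠ ⊤ ∧ W ∈ FSubdiff q X) :
    v ∈ LimSubdiff q xb := by
  choose X W hX hW hqX hXW using fun k : ℕ => hnear (1 / (k + 1)) Nat.one_div_pos_of_nat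
  have hXlim : Tendsto X atTop (𝓝 xb) :=
    tendsto_iff_dist_tendsto_zero.2 <| squeeze_zero (fun _ => dist_nonneg)
      (fun k => (hX k).le) tendsto_one_div_add_atTop_nhds_zero_nat
  have hWlim : Tendsto W atTop (𝓝 v) :=
    tendsto_iff_dist_tendsto_zero.2 <| squeeze_zero (fun _ => dist_nonneg)
      (fun k => (hW k).le) tendsto_one_div_add_atTop_nhds_zero_nat
  exact ⟨hxb, X, W, hXlim, hWlim, hq X hqX hXlim, hXW⟩

theorem mem_limSubdiff_of_tendsto_infEDist {xb v : EuclideanSpace ℝ (Fin n)}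
    {x u : ℕ → EuclideanSpace ℝ (Fin n)}
    (hq : ∀ x : ℕ → EuclideanSpace ℝ (Fin n), (∀ k, q (x k) ≠ ⊤) → Tendsto x atTop (𝓝 xb) →
      Tendsto (fun k => q (x k)) atTop (𝓝 (q xb)))
    (hxb : q xb ≠ ⊤) (hx : Tendsto x atTop (𝓝 xb)) (hu : Tendsto u atTop (𝓝 v))
    (hdist : Tendsto (fun k => Metric.infEDist (u k) (LimSubdiff q (x k))) atTop (𝓝 0)) :
    v ∈ LimSubdiff q xb := by
  refine mem_limSubdiff_of_forall_exists_fSubdiff_near hq hxb fun ε hε => ?_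
  have hε3 : 0 < ε / 3 := by positivity
  obtain ⟨k, hxk, huk, hdk⟩ := ((Metric.tendsto_nhds.1 hx _ hε3).and <|
    (Metric.tendsto_nhds.1 hu _ hε3).and <|
      hdist.eventually (gt_mem_nhds (ENNReal.ofReal_pos.2 hε3))).exists
  obtain ⟨w, hw, huw⟩ := Metric.infEDist_lt_iff.1 hdk
  obtain ⟨X, W, hX, hW, hqX, hXW⟩ := exists_fSubdiff_near_of_mem_limSubdiff hw hε3
  refine ⟨X, W, ?_, ?_, hqX, hXW⟩
  · calc dist X xb ≤ dist X (x k) + dist (x k) xb := dist_triangle _ _ _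
      _ < ε := by linarith
  · calc dist W v ≤ dist W w + dist w (u k) + dist (u k) v := dist_triangle4 _ _ _ _
      _ < ε := by linarith [dist_comm w (u k) ▸ edist_lt_ofReal.1 huw]

end Subdifferential

theorem ContDiff.continuous_gradient {F : Type*} [NormedAddCommGroup F] [InnerProductSpace ℝ F]
    [CompleteSpace F] {f : F → ℝ} (hf : ContDiff ℝ 1 f) : Continuous (gradient f) :=
  (InnerProductSpace.toDual ℝ F).symm.continuous.comp (hf.continuous_fderiv one_ne_zero)

theorem exists_strictMono_tendsto_of_forall_abs_le {ι : Type*} [Fintype ι] {y : ℕ → ι → ℝ}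
    {R : ℝ} (hR : ∀ k i, |y k i| ≤ R) :
    ∃ (ys : ι → ℝ) (φ : ℕ → ℕ), StrictMono φ ∧ Tendsto (y ∘ φ) atTop (𝓝 ys) := by
  obtain ⟨ys, -, φ, hφ, hy⟩ := tendsto_subseq_of_bounded
    (Bornology.IsBounded.pi fun _ : ι => Metric.isBounded_Icc (-R) R)
    fun k => Set.mem_univ_pi.2 fun i => abs_le.1 (hR k i)
  exact ⟨ys, φ, hφ, hy⟩

theorem AKKT_with_bounded_multipliers_is_KKT_general {n m : ℕ}
    (q : EuclideanSpace ℝ (Fin n) → EReal)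
    (hqcont : ∀ (x : ℕ → EuclideanSpace ℝ (Fin n)) (xb : EuclideanSpace ℝ (Fin n)),
      (∀ k, q (x k) ≠ ⊤) → Tendsto x atTop (𝓝 xb) →
      Tendsto (fun k => q (x k)) atTop (𝓝 (q xb)))
    (c : Fin m → EuclideanSpace ℝ (Fin n) → ℝ) (hc : ∀ i, ContDiff ℝ 1 (c i))
    (xs : EuclideanSpace ℝ (Fin n))
    (hxsdom : q xs ≠ ⊤)
    (x : ℕ → EuclideanSpace ℝ (Fin n))
    (hx : Tendsto x atTop (𝓝 xs))
    (y : ℕ → Fin m → ℝ) (hynn : ∀ k i, 0 ≤ y k i)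
    (hdist : Tendsto
      (fun k => Metric.infEDist (-(∑ i, y k i • gradient (c i) (x k))) (LimSubdiff q (x k)))
      atTop (𝓝 0))
    (hcompl : ∀ k i, y k i * c i xs = 0)
    (hbdd : ∃ R : ℝ, ∀ k i, |y k i| ≤ R) :
    ∃ ys : Fin m → ℝ, (∀ i, 0 ≤ ys i) ∧
      -(∑ i, ys i • gradient (c i) xs) ∈ LimSubdiff q xs ∧
      ∀ i, ys i * c i xs = 0 := by
  obtain ⟨R, hR⟩ := hbdd
  obtain ⟨ys, φ, hφ, hy⟩ := exists_strictMono_tendsto_of_forall_abs_le hR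
  have hyi : ∀ i, Tendsto (fun k => y (φ k) i) atTop (𝓝 (ys i)) := tendsto_pi_nhds.1 hy
  have hxφ : Tendsto (x ∘ φ) atTop (𝓝 xs) := hx.comp hφ.tendsto_atTop
  have hresidual : Tendsto (fun k => -(∑ i, y (φ k) i • gradient (c i) (x (φ k)))) atTop
      (𝓝 (-(∑ i, ys i • gradient (c i) xs))) :=
    (tendsto_finsetSum _ fun i _ =>
      (hyi i).smul (((hc i).continuous_gradient.tendsto xs).comp hxφ)).neg
  refine ⟨ys, fun i => ge_of_tendsto' (hyi i) fun k => hynn (φ k) i, ?_, fun i => ?_⟩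
  · exact mem_limSubdiff_of_tendsto_infEDist (hqcont · xs) hxsdom hxφ hresidual
      (hdist.comp hφ.tendsto_atTop)
  · exact tendsto_nhds_unique ((hyi i).mul_const _) (by simp [hcompl])

/-- an A-KKT optimal point with bounded multiplier sequence is KKT optimal:
there is `y⋆ ≥ 0` with `-∇c(x⋆)ᵀ y⋆ ∈ ∂q(x⋆)` and `y⋆_i c_i(x⋆) = 0` for all `i`. -/
theorem AKKT_with_bounded_multipliers_is_KKT {n m : ℕ}
    (q : EuclideanSpace ℝ (Fin n) → EReal)
    (hproper : (∀ x, q x ≠ ⊥) ∧ ∃ x, q x ≠ ⊤)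
    (hlsc : LowerSemicontinuous q)
    (hqcont : ∀ (x : ℕ → EuclideanSpace ℝ (Fin n)) (xb : EuclideanSpace ℝ (Fin n)),
      (∀ k, q (x k) ≠ ⊤) → Tendsto x atTop (𝓝 xb) →
      Tendsto (fun k => q (x k)) atTop (𝓝 (q xb)))
    (c : Fin m → EuclideanSpace ℝ (Fin n) → ℝ) (hc : ∀ i, ContDiff ℝ 1 (c i))
    (xs : EuclideanSpace ℝ (Fin n))
    (hxsdom : q xs ≠ ⊤) (hxsfeas : ∀ i, c i xs ≤ 0)
    (x : ℕ → EuclideanSpace ℝ (Fin n))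
    (hxdom : ∀ k, q (x k) ≠ ⊤) (hxfeas : ∀ k i, c i (x k) ≤ 0)
    (hx : Tendsto x atTop (𝓝 xs))
    (y : ℕ → Fin m → ℝ) (hynn : ∀ k i, 0 ≤ y k i)
    (hdist : Tendsto
      (fun k => Metric.infEDist (-(∑ i, y k i • gradient (c i) (x k))) (LimSubdiff q (x k)))
      atTop (𝓝 0))
    (hcompl : ∀ k i, y k i * c i xs = 0)
    (hbdd : ∃ R : ℝ, ∀ k i, |y k i| ≤ R) :
    ∃ ys : Fin m → ℝ, (∀ i, 0 ≤ ys i) ∧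
      -(∑ i, ys i • gradient (c i) xs) ∈ LimSubdiff q xs ∧
      ∀ i, ys i * c i xs = 0 :=
  AKKT_with_bounded_multipliers_is_KKT_general q hqcont c hc xs hxsdom x hx y hynn hdist hcompl hbdd
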